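/- N²-FWL with hop parameter h = 1 distinguishes the Shrikhande graph from the 4×4 Rook's graph: the N²-FWL color histograms of these two graphs differ (already after one refinement iteration, there is a pair of adjacent vertices in the Shrikhande graph whose color differs from the color of every pair of adjacent vertices of the 4×4 Rook's graph). -/

import Mathlib

/-!
Common formalization of colored graphs, the k-dimensional Weisfeiler-Lehman (WL) test,
the (k,t)-dimensional Folklore WL test (k,t)-FWL and its extension (k,t)-FWL+, together
with the various specific refinement procedures (δ-k-LWL, GraphSNN, edge-based subgraph
refinement, KP-GNN, GDGNN, SLFWL(2), N²-FWL).

Convention: all colorings are formalized as explicitly-valued nested data (an injective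
HASH is the identity).  "The stable colors (resp. color histograms) are equal" is rendered
as "the colors (resp. color histograms) at every iteration l are equal"; since the colors
at iteration l determine those at every earlier iteration and the partitions stabilize on
finite graphs, this is equivalent to equality of the stable colors.
-/

open Finset

noncomputable section

/-- A finite colored, undirected, simple graph. -/
structure ColoredGraph (C : Type) where
  V : Type
  fintypeV : Fintype V
  decEqV : DecidableEq V
  adj : V → V → Prop
  symm : ∀ u v, adj u v → adj v u
  loopless : ∀ v, ¬ adj v v
  color : V → C

attribute [instance] ColoredGraph.fintypeV ColoredGraph.decEqV

/-- The data recording the isomorphism type of a `k`-tuple of vertices: the colors of the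
entries, the equalities among entries, and the adjacencies among entries. -/
abbrev IsoType (C : Type) (k : ℕ) : Type :=
  (Fin k → C) × (Fin k → Fin k → Prop) × (Fin k → Fin k → Prop)

namespace ColoredGraph

variable {C : Type}

/-- The isomorphism type of a `k`-tuple of vertices.  Two tuples (possibly in different
graphs) have the same isomorphism type iff these values are equal. -/
def isoType (G : ColoredGraph C) {k : ℕ} (v : Fin k → G.V) : IsoType C k :=
  (fun i => G.color (v i), fun i j => v i = v j, fun i j => G.adj (v i) (v j))

/-- The underlying simple graph. -/
def toSimple (G : ColoredGraph C) : SimpleGraph G.V where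
  Adj := G.adj
  symm := ⟨fun u v h => G.symm u v h⟩
  loopless := ⟨fun v h => G.loopless v h⟩

/-- `Q₁(v)`: the set of neighbors of `v`. -/
def nbhd (G : ColoredGraph C) (v : G.V) : Finset G.V :=
  @Finset.filter _ (fun u => G.adj v u) (Classical.decPred _) Finset.univ

/-- `N₁(v)`: the closed neighborhood of `v`. -/
def closedNbhd (G : ColoredGraph C) (v : G.V) : Finset G.V :=
  @Finset.filter _ (fun u => u = v ∨ G.adj v u) (Classical.decPred _) Finset.univ

/-- `N_h(v)`: the set of vertices within `h` hops of `v` (including `v`). -/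
def ball (G : ColoredGraph C) (h : ℕ) (v : G.V) : Finset G.V :=
  @Finset.filter _ (fun u => ∃ p : G.toSimple.Walk v u, p.length ≤ h)
    (Classical.decPred _) Finset.univ

/-- `Q_d(v)`: the set of vertices at shortest-path distance exactly `d` from `v`. -/
def sphere (G : ColoredGraph C) (d : ℕ) (v : G.V) : Finset G.V :=
  @Finset.filter _ (fun u => G.toSimple.Reachable v u ∧ G.toSimple.dist v u = d)
    (Classical.decPred _) Finset.univ

/-- `SP(v₁,v₂)`: the set of vertices lying on shortest paths between `v₁` and `v₂`
(with `SP(v,v) = {v}`). -/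
def spSet (G : ColoredGraph C) (v₁ v₂ : G.V) : Finset G.V :=
  if v₁ = v₂ then {v₁}
  else
    @Finset.filter _
      (fun w => G.toSimple.Reachable v₁ w ∧ G.toSimple.Reachable w v₂ ∧
        G.toSimple.dist v₁ w + G.toSimple.dist w v₂ = G.toSimple.dist v₁ v₂)
      (Classical.decPred _) Finset.univ

/-- Isomorphism of colored graphs. -/
def Isomorphic (G H : ColoredGraph C) : Prop :=
  ∃ φ : G.V ≃ H.V,
    (∀ u v : G.V, G.adj u v ↔ H.adj (φ u) (φ v)) ∧ ∀ v : G.V, H.color (φ v) = G.color v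

end ColoredGraph

variable {C : Type}

/-- The type of `t`-fold nested (hierarchical) multisets over `α`. -/
def HMS (α : Type) : ℕ → Type
  | 0 => α
  | t + 1 => Multiset (HMS α t)

/-- The hierarchical multiset `{{x(w) : w ∈ S₁ × … × S_t}}_t`, grouped so that the
innermost multiset ranges over the first coordinate and the outermost over the last. -/
def hms {V α : Type} : (t : ℕ) → (Fin t → Finset V) → ((Fin t → V) → α) → HMS α t
  | 0, _, x => x finZeroElim
  | t + 1, S, x =>
      (S (Fin.last t)).val.map fun wl =>
        hms t (fun i => S i.castSucc) fun w => x (Fin.snoc w wl)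

/-- Replace the entries of `v` at the given indices by the given values. -/
def replaceList {V : Type} {k : ℕ} (v : Fin k → V) : List (Fin k × V) → (Fin k → V)
  | [] => v
  | p :: ps => Function.update (replaceList v ps) p.1 p.2

/-- The neighborhood tuple `Q^F_w(v)` of a `k`-tuple `v` with respect to a `t`-tuple `w`:
for each `m = 0, 1, …, min k t`, every `m`-subtuple of `w` (index sets in the fixed order
given by `List.sublistsLen`) is substituted into `v` at every increasing tuple of `m`
positions (in the fixed order given by `List.sublistsLen`), and all resulting `k`-tuples
are concatenated in this fixed order (for `m = 0` this contributes `v` itself). -/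
def nbhdTuple {V : Type} (k t : ℕ) (v : Fin k → V) (w : Fin t → V) : List (Fin k → V) :=
  (List.range (min k t + 1)).flatMap fun m =>
    ((List.finRange t).sublistsLen m).flatMap fun ws =>
      ((List.finRange k).sublistsLen m).map fun js =>
        replaceList v (js.zip (ws.map w))

/-! ### The k-WL colorings -/

/-- The type of `k`-WL colors at iteration `l`. -/
def WLColor (C : Type) (k : ℕ) : ℕ → Type
  | 0 => IsoType C k
  | l + 1 => WLColor C k l × (Fin k → Multiset (WLColor C k l))

/-- The `k`-WL coloring of `k`-tuples at iteration `l`. -/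
def wlColor (G : ColoredGraph C) (k : ℕ) : (l : ℕ) → (Fin k → G.V) → WLColor C k l
  | 0, v => G.isoType v
  | l + 1, v =>
      (wlColor G k l v,
        fun j => Finset.univ.val.map fun w => wlColor G k l (Function.update v j w))

/-- The `k`-WL color histogram of `G` at iteration `l`. -/
def wlHistogram (G : ColoredGraph C) (k l : ℕ) : Multiset (WLColor C k l) :=
  Finset.univ.val.map fun v => wlColor G k l v

/-! ### The (k,t)-FWL and (k,t)-FWL+ colorings -/

/-- The type of `(k,t)`-FWL(+) colors at iteration `l` (hierarchical multiset version). -/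
def FWLColor (C : Type) (k t : ℕ) : ℕ → Type
  | 0 => IsoType C k
  | l + 1 => FWLColor C k t l × HMS (List (FWLColor C k t l)) t

/-- The `(k,t)`-FWL+ coloring with the equivariant set `ES` given coordinatewise
(so that `w` ranges over `ES v 0 × … × ES v (t-1)`, aggregated hierarchically). -/
def fwlpColor (G : ColoredGraph C) (k t : ℕ) (ES : (Fin k → G.V) → Fin t → Finset G.V) :
    (l : ℕ) → (Fin k → G.V) → FWLColor C k t l
  | 0, v => G.isoType v
  | l + 1, v =>
      (fwlpColor G k t ES l v,
        hms t (ES v) fun w => (nbhdTuple k t v w).map fun u => fwlpColor G k t ES l u)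

/-- The `(k,t)`-FWL coloring (all coordinates of `w` range over all vertices). -/
def fwlColor (G : ColoredGraph C) (k t : ℕ) : (l : ℕ) → (Fin k → G.V) → FWLColor C k t l :=
  fwlpColor G k t fun _ _ => Finset.univ

/-- The `(k,t)`-FWL color histogram of `G` at iteration `l`. -/
def fwlHistogram (G : ColoredGraph C) (k t l : ℕ) : Multiset (FWLColor C k t l) :=
  Finset.univ.val.map fun v => fwlColor G k t l v

/-- The extended `(k,t)`-FWL color of a `(k+t)`-tuple `p = (v, w)`:
`C^{l+1}(p) = (C^l(u) : u ∈ Q^F_w(v))`, recorded here at level `l`. -/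
def fwlExtColor (G : ColoredGraph C) (k t l : ℕ) (v : Fin k → G.V) (w : Fin t → G.V) :
    List (FWLColor C k t l) :=
  (nbhdTuple k t v w).map fun u => fwlColor G k t l u

/-- The type of `(k,t)`-FWL+ colors at iteration `l` (plain multiset version). -/
def FWLPlainColor (C : Type) (k : ℕ) : ℕ → Type
  | 0 => IsoType C k
  | l + 1 => FWLPlainColor C k l × Multiset (List (FWLPlainColor C k l))

/-- The `(k,t)`-FWL+ coloring with equivariant set `ES` given coordinatewise, aggregated
as a plain multiset over `ES v 0 × … × ES v (t-1)`. -/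
def fwlpPlainColor (G : ColoredGraph C) (k t : ℕ)
    (ES : (Fin k → G.V) → Fin t → Finset G.V) :
    (l : ℕ) → (Fin k → G.V) → FWLPlainColor C k l
  | 0, v => G.isoType v
  | l + 1, v =>
      (fwlpPlainColor G k t ES l v,
        (Fintype.piFinset (ES v)).val.map fun w =>
          (nbhdTuple k t v w).map fun u => fwlpPlainColor G k t ES l u)

/-! ### δ-k-LWL -/

/-- The δ-k-LWL coloring. -/
def dklwlColor (G : ColoredGraph C) (k : ℕ) : (l : ℕ) → (Fin k → G.V) → WLColor C k l
  | 0, v => G.isoType v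
  | l + 1, v =>
      (dklwlColor G k l v,
        fun j => (G.nbhd (v j)).val.map fun w => dklwlColor G k l (Function.update v j w))

/-! ### SLFWL(2) -/

/-- The type of SLFWL(2) colors at iteration `l`. -/
def SLColor (C : Type) : ℕ → Type
  | 0 => IsoType C 2
  | l + 1 => SLColor C l × Multiset (SLColor C l × SLColor C l)

/-- The SLFWL(2) coloring of pairs of vertices. -/
def slColor (G : ColoredGraph C) : (l : ℕ) → G.V → G.V → SLColor C l
  | 0, v₁, v₂ => G.isoType ![v₁, v₂]
  | l + 1, v₁, v₂ =>
      (slColor G l v₁ v₂,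
        (G.closedNbhd v₁ ∪ G.closedNbhd v₂).val.map fun w =>
          (slColor G l v₁ w, slColor G l w v₂))

/-! ### The edge-based subgraph refinement (as in I²-GNN) -/

/-- The type of edge-based subgraph refinement colors at iteration `l`. -/
def EdgeColor (C : Type) : ℕ → Type
  | 0 => C × Prop × Prop
  | l + 1 => EdgeColor C l × Multiset (EdgeColor C l)

/-- The edge-based subgraph refinement: the color of `v₂` in the subgraph rooted at the
edge `(v₁, w₂)`; the initial color is `l_G(v₂)` together with markers for `v₂ = v₁` and
`v₂ = w₂`. -/
def edgeColor (G : ColoredGraph C) : (l : ℕ) → G.V → G.V → G.V → EdgeColor C l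
  | 0, v₁, v₂, w₂ => (G.color v₂, v₂ = v₁, v₂ = w₂)
  | l + 1, v₁, v₂, w₂ =>
      (edgeColor G l v₁ v₂ w₂, (G.nbhd v₂).val.map fun w₁ => edgeColor G l v₁ w₁ w₂)

/-- The graph color histogram of the edge-based subgraph refinement at iteration `l`:
`{{ {{ {{ C(v₁,v₂,w₂) : v₂ ∈ V }} : w₂ ∈ Q₁(v₁) }} : v₁ ∈ V }}`. -/
def edgeHistogram (G : ColoredGraph C) (l : ℕ) :
    Multiset (Multiset (Multiset (EdgeColor C l))) :=
  Finset.univ.val.map fun v₁ =>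
    (G.nbhd v₁).val.map fun w₂ => Finset.univ.val.map fun v₂ => edgeColor G l v₁ v₂ w₂

/-! ### GraphSNN -/

/-- `V_{v₁v₂}`: the vertex set of the overlapping 1-hop subgraph between `v₁` and `v₂`. -/
def snnOverlapVerts (G : ColoredGraph C) (v₁ v₂ : G.V) : Finset G.V :=
  G.closedNbhd v₁ ∩ G.closedNbhd v₂

/-- `|E_{v₁v₂}|`: the number of edges of `G` with both endpoints in `V_{v₁v₂}`
(ordered adjacent pairs counted once, i.e. divided by two). -/
def snnEdgeCount (G : ColoredGraph C) (v₁ v₂ : G.V) : ℝ :=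
  ((@Finset.filter (G.V × G.V)
      (fun p => p.1 ∈ snnOverlapVerts G v₁ v₂ ∧ p.2 ∈ snnOverlapVerts G v₁ v₂ ∧
        G.adj p.1 p.2)
      (Classical.decPred _) Finset.univ).card : ℝ) / 2

/-- The GraphSNN structural value `|E_{v₁v₂}|·|V_{v₁v₂}|^λ / (|V_{v₁v₂}|·(|V_{v₁v₂}|−1))`. -/
def snnVal (G : ColoredGraph C) (lam : ℝ) (v₁ v₂ : G.V) : ℝ :=
  (snnEdgeCount G v₁ v₂ * ((snnOverlapVerts G v₁ v₂).card : ℝ) ^ lam) /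
    (((snnOverlapVerts G v₁ v₂).card : ℝ) * (((snnOverlapVerts G v₁ v₂).card : ℝ) - 1))

/-- The type of GraphSNN colors at iteration `l`. -/
def SNNColor (C : Type) : ℕ → Type
  | 0 => IsoType C 2 ⊕ ℝ
  | l + 1 => (SNNColor C l × Multiset (SNNColor C l × SNNColor C l)) ⊕ ℝ

/-- The GraphSNN refinement: off-diagonal pairs get the fixed color `snnVal`; diagonal
pairs are refined iteratively. -/
def snnColor (G : ColoredGraph C) (lam : ℝ) : (l : ℕ) → G.V → G.V → SNNColor C l
  | 0, v₁, v₂ =>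
      if v₁ = v₂ then Sum.inl (G.isoType ![v₁, v₂]) else Sum.inr (snnVal G lam v₁ v₂)
  | l + 1, v₁, v₂ =>
      if v₁ = v₂ then
        Sum.inl (snnColor G lam l v₁ v₂,
          (G.nbhd v₁).val.map fun w => (snnColor G lam l v₁ w, snnColor G lam l w w))
      else Sum.inr (snnVal G lam v₁ v₂)

/-! ### KP-GNN (shortest-path-distance kernel, peripheral encoder as powerful as 1-WL) -/

/-- The type of KP-GNN colors at iteration `l`. -/
def KPColor (C : Type) : ℕ → Type
  | 0 => IsoType C 2 × ℕ
  | l + 1 => KPColor C l × (Multiset (KPColor C l × KPColor C l) ⊕ Multiset (KPColor C l))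

/-- The KP-GNN refinement of pairs of vertices. -/
def kpColor (G : ColoredGraph C) : (l : ℕ) → G.V → G.V → KPColor C l
  | 0, v₁, v₂ => (G.isoType ![v₁, v₂], G.toSimple.dist v₁ v₂)
  | l + 1, v₁, v₂ =>
      (kpColor G l v₁ v₂,
        if v₁ = v₂ then
          Sum.inl (Finset.univ.val.map fun w => (kpColor G l w w, kpColor G l v₁ w))
        else
          Sum.inr ((G.sphere (G.toSimple.dist v₁ v₂) v₁ ∩ G.nbhd v₂).val.map fun w =>
            kpColor G l v₁ w))

/-- The type of colors of the (2,1)-FWL+ instance corresponding to KP-GNN. -/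
def KPFColor (C : Type) : ℕ → Type
  | 0 => IsoType C 2 × ℕ
  | l + 1 => KPFColor C l × Multiset (KPFColor C l)

/-- The (2,1)-FWL+ instance with `ES(v₁,v₂) = Q_{SPD(v₁,v₂)}(v₁) ∩ Q₁(v₂)` and initial
color the isomorphism type together with `SPD(v₁,v₂)`. -/
def kpfColor (G : ColoredGraph C) : (l : ℕ) → G.V → G.V → KPFColor C l
  | 0, v₁, v₂ => (G.isoType ![v₁, v₂], G.toSimple.dist v₁ v₂)
  | l + 1, v₁, v₂ =>
      (kpfColor G l v₁ v₂,
        (G.sphere (G.toSimple.dist v₁ v₂) v₁ ∩ G.nbhd v₂).val.map fun w => kpfColor G l v₁ w)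

/-! ### GDGNN -/

/-- The type of GDGNN colors at iteration `l`. -/
def GDColor (C : Type) : ℕ → Type
  | 0 => IsoType C 2
  | l + 1 => GDColor C l × Multiset (GDColor C l) × Multiset (GDColor C l)

/-- The GDGNN refinement of pairs of vertices. -/
def gdColor (G : ColoredGraph C) : (l : ℕ) → G.V → G.V → GDColor C l
  | 0, v₁, v₂ => G.isoType ![v₁, v₂]
  | l + 1, v₁, v₂ =>
      (gdColor G l v₁ v₂,
        (G.nbhd v₂).val.map fun w => gdColor G l v₁ w,
        (G.spSet v₁ v₂).val.map fun w => gdColor G l v₁ w)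

/-! ### N²-FWL -/

/-- The coordinatewise neighborhood of N²-FWL with hop parameter `h`:
`N²(v₁,v₂) = (N₁(v₂) × N₁(v₁)) ∩ (N_h(v₁) ∩ N_h(v₂))²`, written as a product. -/
def n2ES (G : ColoredGraph C) (h : ℕ) (v : Fin 2 → G.V) : Fin 2 → Finset G.V :=
  ![G.closedNbhd (v 1) ∩ G.ball h (v 0) ∩ G.ball h (v 1),
    G.closedNbhd (v 0) ∩ G.ball h (v 0) ∩ G.ball h (v 1)]

/-- The N²-FWL coloring with hop parameter `h`:
the (2,2)-FWL+ instance with neighborhood `N²(v₁,v₂)`. -/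
def n2Color (G : ColoredGraph C) (h : ℕ) : (l : ℕ) → (Fin 2 → G.V) → FWLColor C 2 2 l :=
  fwlpColor G 2 2 (n2ES G h)

end

/-- The 4×4 Rook's graph, with the constant vertex coloring. -/
def rookGraph : ColoredGraph Unit where
  V := Fin 4 × Fin 4
  fintypeV := inferInstance
  decEqV := inferInstance
  adj := fun p q => (p.1 = q.1 ∧ p.2 ≠ q.2) ∨ (p.2 = q.2 ∧ p.1 ≠ q.1)
  symm := by decide
  loopless := by decide
  color := fun _ => ()

/-- The Shrikhande graph, with the constant vertex coloring. -/
def shrikhande : ColoredGraph Unit where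
  V := ZMod 4 × ZMod 4
  fintypeV := inferInstance
  decEqV := inferInstance
  adj := fun x y =>
    x - y = (1, 0) ∨ x - y = (-1, 0) ∨ x - y = (0, 1) ∨ x - y = (0, -1) ∨
      x - y = (1, 1) ∨ x - y = (-1, -1)
  symm := by decide
  loopless := by decide
  color := fun _ => ()

-- auxiliary development
section Aux

/-- extract the level-1 FWL color as a pair -/
def toPair (c : FWLColor Unit 2 2 1) :
    FWLColor Unit 2 2 0 × Multiset (Multiset (List (IsoType Unit 2))) := c

/-- the distinguishing predicate on neighborhood-tuple color lists -/
def Qp : List (IsoType Unit 2) → Prop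
  | [_, t1, t2, t3, t4, t5] =>
      (¬ t1.2.1 0 1 ∧ t1.2.2 0 1) ∧ (¬ t2.2.1 0 1 ∧ t2.2.2 0 1) ∧
      (¬ t3.2.1 0 1 ∧ t3.2.2 0 1) ∧ (¬ t4.2.1 0 1 ∧ t4.2.2 0 1) ∧
      (¬ t5.2.1 0 1 ∧ t5.2.2 0 1)
  | _ => False

/-- the distinguishing color invariant -/
def Phi (c : FWLColor Unit 2 2 1) : Prop :=
  ∃ m ∈ (toPair c).2, ∃ l ∈ m, Qp l

lemma nbhdTuple_two {V : Type} (v w : Fin 2 → V) :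
    nbhdTuple 2 2 v w =
      [v, Function.update v 1 (w 1), Function.update v 0 (w 1),
        Function.update v 1 (w 0), Function.update v 0 (w 0),
        Function.update (Function.update v 1 (w 1)) 0 (w 0)] := rfl

lemma ball_one {C : Type} (G : ColoredGraph C) (v u : G.V) :
    u ∈ G.ball 1 v ↔ u = v ∨ G.adj v u := by
  unfold ColoredGraph.ball
  rw [@Finset.mem_filter _ _ (Classical.decPred _)]
  simp only [Finset.mem_univ, true_and]
  constructor
  · rintro ⟨p, hp⟩
    cases p with
    | nil => exact Or.inl rfl
    | cons h q =>
      have hq : q.length = 0 := by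
        have := hp; simp only [SimpleGraph.Walk.length_cons] at this; omega
      have := q.eq_of_length_eq_zero hq
      subst this
      exact Or.inr h
  · rintro (rfl | h)
    · exact ⟨SimpleGraph.Walk.nil, by simp⟩
    · exact ⟨SimpleGraph.Walk.cons (show G.toSimple.Adj v u from h) SimpleGraph.Walk.nil, by simp⟩

lemma snoc_two {V : Type} (a b : V) :
    (Fin.snoc (Fin.snoc (finZeroElim : Fin 0 → V) a) b : Fin 2 → V) = ![a, b] := by
  funext i
  fin_cases i <;> simp [Fin.snoc]

end Aux

section PhiIff

lemma mem_closedNbhd {C : Type} (G : ColoredGraph C) (v u : G.V) :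
    u ∈ G.closedNbhd v ↔ u = v ∨ G.adj v u := by
  unfold ColoredGraph.closedNbhd
  rw [@Finset.mem_filter _ _ (Classical.decPred _)]
  simp

lemma mem_n2ES {C : Type} (G : ColoredGraph C) (v : Fin 2 → G.V) (i : Fin 2) (u : G.V) :
    u ∈ n2ES G 1 v i ↔
      (u = v 0 ∨ G.adj (v 0) u) ∧ (u = v 1 ∨ G.adj (v 1) u) := by
  fin_cases i
  · show u ∈ G.closedNbhd (v 1) ∩ G.ball 1 (v 0) ∩ G.ball 1 (v 1) ↔ _
    simp only [Finset.mem_inter, mem_closedNbhd, ball_one]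
    tauto
  · show u ∈ G.closedNbhd (v 0) ∩ G.ball 1 (v 0) ∩ G.ball 1 (v 1) ↔ _
    simp only [Finset.mem_inter, mem_closedNbhd, ball_one]
    tauto

lemma Qp_map (G : ColoredGraph Unit) (v w : Fin 2 → G.V) :
    Qp ((nbhdTuple 2 2 v w).map G.isoType) ↔
      (¬ v 0 = w 1 ∧ G.adj (v 0) (w 1)) ∧ (¬ w 1 = v 1 ∧ G.adj (w 1) (v 1)) ∧
      (¬ v 0 = w 0 ∧ G.adj (v 0) (w 0)) ∧ (¬ w 0 = v 1 ∧ G.adj (w 0) (v 1)) ∧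
      (¬ w 0 = w 1 ∧ G.adj (w 0) (w 1)) := by
  rw [nbhdTuple_two]
  simp only [List.map_cons, List.map_nil]
  show Qp [G.isoType v, _, _, _, _, _] ↔ _
  simp only [Qp, ColoredGraph.isoType]
  simp [Function.update]

lemma hms_two {V α : Type} (S : Fin 2 → Finset V) (x : (Fin 2 → V) → α) :
    (hms 2 S x : Multiset (Multiset α)) =
      (S 1).val.map fun b => (S 0).val.map fun a => x ![a, b] := by
  show Multiset.map _ (S (Fin.last 1)).val = _
  have h1 : Fin.last 1 = 1 := rfl
  rw [h1]
  apply Multiset.map_congr rfl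
  intro b _
  show Multiset.map _ (S ((Fin.last 0).castSucc)).val = _
  have h0 : (Fin.last 0).castSucc = (0 : Fin 2) := rfl
  rw [h0]
  apply Multiset.map_congr rfl
  intro a _
  show x (Fin.snoc (Fin.snoc finZeroElim a) b) = _
  rw [snoc_two]

lemma phi_iff (G : ColoredGraph Unit) (v₀ v₁ : G.V) :
    Phi (n2Color G 1 1 ![v₀, v₁]) ↔
      ∃ w1, (G.adj v₀ w1 ∧ G.adj w1 v₁ ∧ v₀ ≠ w1 ∧ w1 ≠ v₁) ∧
        ∃ w0, G.adj v₀ w0 ∧ G.adj w0 v₁ ∧ v₀ ≠ w0 ∧ w0 ≠ v₁ ∧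
          w0 ≠ w1 ∧ G.adj w0 w1 := by
  have key : (toPair (n2Color G 1 1 ![v₀, v₁])).2 =
      (n2ES G 1 ![v₀, v₁] 1).val.map fun b => (n2ES G 1 ![v₀, v₁] 0).val.map fun a =>
        (nbhdTuple 2 2 ![v₀, v₁] ![a, b]).map G.isoType := by
    have h : (toPair (n2Color G 1 1 ![v₀, v₁])).2 = hms 2 (n2ES G 1 ![v₀, v₁])
        (fun w => (nbhdTuple 2 2 ![v₀, v₁] w).map (fwlpColor G 2 2 (n2ES G 1) 0)) := rfl
    rw [h, hms_two]
    apply Multiset.map_congr rfl; intro b _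
    apply Multiset.map_congr rfl; intro a _
    apply List.map_congr_left
    intro u _
    rfl
  unfold Phi
  rw [key]
  constructor
  · rintro ⟨m, hm, l, hl, hQ⟩
    obtain ⟨b, hb, rfl⟩ := Multiset.mem_map.mp hm
    obtain ⟨a, ha, rfl⟩ := Multiset.mem_map.mp hl
    rw [Qp_map] at hQ
    simp only [Matrix.cons_val_zero, Matrix.cons_val_one, Matrix.head_cons] at hQ
    obtain ⟨⟨h1e, h1a⟩, ⟨h2e, h2a⟩, ⟨h3e, h3a⟩, ⟨h4e, h4a⟩, ⟨h5e, h5a⟩⟩ := hQ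
    exact ⟨b, ⟨h1a, h2a, h1e, h2e⟩, a, h3a, h4a, h3e, h4e, h5e, h5a⟩
  · rintro ⟨b, ⟨hb1, hb2, hb3, hb4⟩, a, ha1, ha2, ha3, ha4, ha5, ha6⟩
    refine ⟨_, Multiset.mem_map.mpr ⟨b, ?_, rfl⟩, _, Multiset.mem_map.mpr ⟨a, ?_, rfl⟩, ?_⟩
    · rw [Finset.mem_val, mem_n2ES]
      simp only [Matrix.cons_val_zero, Matrix.cons_val_one, Matrix.head_cons]
      exact ⟨Or.inr hb1, Or.inr (G.symm _ _ hb2)⟩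
    · rw [Finset.mem_val, mem_n2ES]
      simp only [Matrix.cons_val_zero, Matrix.cons_val_one, Matrix.head_cons]
      exact ⟨Or.inr ha1, Or.inr (G.symm _ _ ha2)⟩
    · rw [Qp_map]
      simp only [Matrix.cons_val_zero, Matrix.cons_val_one, Matrix.head_cons]
      exact ⟨⟨hb3, hb1⟩, ⟨hb4, hb2⟩, ⟨ha3, ha1⟩, ⟨ha4, ha2⟩, ⟨ha5, ha6⟩⟩

end PhiIff

section Dec

def sAdj (x y : ZMod 4 × ZMod 4) : Prop :=
  x - y = (1, 0) ∨ x - y = (-1, 0) ∨ x - y = (0, 1) ∨ x - y = (0, -1) ∨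
    x - y = (1, 1) ∨ x - y = (-1, -1)

instance (x y : ZMod 4 × ZMod 4) : Decidable (sAdj x y) := by unfold sAdj; infer_instance

lemma sadj_eq : shrikhande.adj = sAdj := rfl

def rAdj (p q : Fin 4 × Fin 4) : Prop :=
  (p.1 = q.1 ∧ p.2 ≠ q.2) ∨ (p.2 = q.2 ∧ p.1 ≠ q.1)

instance (p q : Fin 4 × Fin 4) : Decidable (rAdj p q) := by unfold rAdj; infer_instance

lemma radj_eq : rookGraph.adj = rAdj := rfl

set_option maxRecDepth 10000 in
lemma shrik_no : ∀ w1 w0 : ZMod 4 × ZMod 4,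
    ¬(sAdj (0, 0) w1 ∧ sAdj w1 (1, 0) ∧ (0, 0) ≠ w1 ∧ w1 ≠ (1, 0) ∧
      sAdj (0, 0) w0 ∧ sAdj w0 (1, 0) ∧ (0, 0) ≠ w0 ∧ w0 ≠ (1, 0) ∧
      w0 ≠ w1 ∧ sAdj w0 w1) := by decide

set_option maxRecDepth 100000 in
lemma rook_yes : ∀ u₁ u₂ : Fin 4 × Fin 4, rAdj u₁ u₂ →
    ∃ w1, (rAdj u₁ w1 ∧ rAdj w1 u₂ ∧ u₁ ≠ w1 ∧ w1 ≠ u₂) ∧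
      ∃ w0, rAdj u₁ w0 ∧ rAdj w0 u₂ ∧ u₁ ≠ w0 ∧ w0 ≠ u₂ ∧ w0 ≠ w1 ∧ rAdj w0 w1 := by
  decide

end Dec

lemma eta_two {α : Type} (u : Fin 2 → α) : u = ![u 0, u 1] := by
  funext i; fin_cases i <;> rfl


/-- N²-FWL with hop parameter `h = 1` distinguishes the Shrikhande
graph from the 4×4 Rook's graph: their stable N²-FWL color histograms differ, and
already after one refinement iteration there is a pair of adjacent vertices of the
Shrikhande graph whose color differs from the color of every pair of adjacent vertices
of the Rook's graph. -/
theorem stmt_19 :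
    (¬ ∀ l, (Finset.univ.val.map fun v : Fin 2 → shrikhande.V => n2Color shrikhande 1 l v) =
      (Finset.univ.val.map fun v : Fin 2 → rookGraph.V => n2Color rookGraph 1 l v)) ∧
    (∃ v₁ v₂ : shrikhande.V, shrikhande.adj v₁ v₂ ∧
      ∀ u₁ u₂ : rookGraph.V, rookGraph.adj u₁ u₂ →
        n2Color shrikhande 1 1 ![v₁, v₂] ≠ n2Color rookGraph 1 1 ![u₁, u₂]) := by
  have adj00 : shrikhande.adj ((0 : ZMod 4), (0 : ZMod 4)) ((1 : ZMod 4), (0 : ZMod 4)) := by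
    show sAdj _ _
    decide
  have hs : ¬ Phi (n2Color shrikhande 1 1
      ![((0 : ZMod 4), (0 : ZMod 4)), ((1 : ZMod 4), (0 : ZMod 4))]) := by
    refine mt (phi_iff shrikhande _ _).mp ?_
    rintro ⟨w1, ⟨a1, a2, a3, a4⟩, w0, b1, b2, b3, b4, b5, b6⟩
    exact shrik_no w1 w0 ⟨a1, a2, a3, a4, b1, b2, b3, b4, b5, b6⟩
  have main : ∀ u₁ u₂ : rookGraph.V, rookGraph.adj u₁ u₂ →
      n2Color shrikhande 1 1 ![((0 : ZMod 4), (0 : ZMod 4)), ((1 : ZMod 4), (0 : ZMod 4))] ≠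
        n2Color rookGraph 1 1 ![u₁, u₂] := by
    intro u₁ u₂ hadj heq
    have hr : Phi (n2Color rookGraph 1 1 ![u₁, u₂]) := by
      rw [phi_iff]
      obtain ⟨w1, h1, w0, h0⟩ := rook_yes u₁ u₂ hadj
      exact ⟨w1, h1, w0, h0⟩
    exact hs (by rw [heq]; exact hr)
  refine ⟨?_, ((0 : ZMod 4), (0 : ZMod 4)), ((1 : ZMod 4), (0 : ZMod 4)), adj00, main⟩
  intro hall
  have h1 := hall 1
  have hc : n2Color shrikhande 1 1
        ![((0 : ZMod 4), (0 : ZMod 4)), ((1 : ZMod 4), (0 : ZMod 4))] ∈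
      Finset.univ.val.map fun v : Fin 2 → shrikhande.V => n2Color shrikhande 1 1 v :=
    Multiset.mem_map.mpr ⟨![((0 : ZMod 4), (0 : ZMod 4)), ((1 : ZMod 4), (0 : ZMod 4))],
      by simp, rfl⟩
  rw [h1] at hc
  obtain ⟨u, _, hu⟩ := Multiset.mem_map.mp hc
  have h1c : rookGraph.isoType u = shrikhande.isoType
      ![((0 : ZMod 4), (0 : ZMod 4)), ((1 : ZMod 4), (0 : ZMod 4))] :=
    congrArg (fun c => (toPair c).1) hu
  have hadjP : rookGraph.adj (u 0) (u 1) =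
      shrikhande.adj ((0 : ZMod 4), (0 : ZMod 4)) ((1 : ZMod 4), (0 : ZMod 4)) :=
    congrArg (fun t : IsoType Unit 2 => t.2.2 0 1) h1c
  exact main (u 0) (u 1) (hadjP.symm ▸ adj00) (by rw [← eta_two u]; exact hu.symm)
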